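/- Let n ≥ 1, ρ > 0, and f ∈ C[0,1]. Then there exist points 0 = t₀ < t₁ < … < t_n = 1 such that f(t_i) − L_n^ρ f(t_i) = 0 for all i = 0,1,…,n. -/

import Mathlib

/-!
Let `g = f - L`. Interpolation at `F_{n,0}` and `F_{n,n}` gives `g 0 = g 1 = 0`; interpolation at
the interior functionals says that `g` is orthogonal on `(0,1)` to the Beta weights
`t^(kρ-1) (1-t)^((n-k)ρ-1)`, `0 < k < n`. Under the substitution `s = (t/(1-t))^ρ` these weights
become `w(t) s^(k-1)` with `w = t^(ρ-1) (1-t)^((n-1)ρ-1) > 0`, so `g` is `w`-orthogonal to every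
polynomial in `s` of degree `< n - 1`. If `g` had fewer than `n - 1` zeros in `(0,1)`, some such
polynomial, with roots at the images of zeros of `g`, would have the sign of `g` away from these
zeros, and then `∫ w q(s) g > 0`. So `g` has `n - 1` interior zeros, and with `0` and `1` these are
the required points.
-/

open MeasureTheory

/-- Euler Beta function `B(a,b) = ∫₀¹ t^(a-1) (1-t)^(b-1) dt`. -/
noncomputable def betaFn (a b : ℝ) : ℝ :=
  ∫ t in (0:ℝ)..1, t ^ (a - 1) * (1 - t) ^ (b - 1)

/-- The functionals `F_{n,k}^ρ`. -/
noncomputable def Ffun (n k : ℕ) (ρ : ℝ) (f : ℝ → ℝ) : ℝ :=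
  if k = 0 then f 0
  else if k = n then f 1
  else (betaFn ((k : ℝ) * ρ) (((n : ℝ) - (k : ℝ)) * ρ))⁻¹ *
    ∫ t in (0:ℝ)..1, t ^ ((k : ℝ) * ρ - 1) * (1 - t) ^ (((n : ℝ) - (k : ℝ)) * ρ - 1) * f t

/-- Bernstein basis polynomial `p_{n,k}(x)`. -/
noncomputable def bern (n k : ℕ) (x : ℝ) : ℝ :=
  (n.choose k : ℝ) * x ^ k * (1 - x) ^ (n - k)

/-- The operator `U_n^ρ`. -/
noncomputable def Uop (n : ℕ) (ρ : ℝ) (f : ℝ → ℝ) (x : ℝ) : ℝ :=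
  ∑ k ∈ Finset.range (n + 1), Ffun n k ρ f * bern n k x

open Set Polynomial

theorem IsPreconnected.forall_pos_or_forall_neg {α : Type*} [TopologicalSpace α] {s : Set α}
    {h : α → ℝ} (hs : IsPreconnected s) (hh : ContinuousOn h s) (hne : ∀ x ∈ s, h x ≠ 0) :
    (∀ x ∈ s, 0 < h x) ∨ ∀ x ∈ s, h x < 0 := by
  by_contra! ⟨⟨a, ha, hha⟩, b, hb, hhb⟩
  obtain ⟨c, hc, hc0⟩ := hs.intermediate_value ha hb hh ⟨hha, hhb⟩
  exact hne c hc hc0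

theorem exists_natDegree_le_one_eval_comp_mul_pos {I : Set ℝ} (hI : I.OrdConnected)
    {φ h : ℝ → ℝ} (hφ : StrictMonoOn φ I) {z : ℝ} (hz : z ∈ I)
    (hh : ContinuousOn h (I ∩ Ioi z)) (hne : ∀ t ∈ I, z < t → h t ≠ 0) :
    ∃ r : ℝ[X], r.natDegree ≤ 1 ∧ (∀ x, r.eval x = 0 → x = φ z) ∧
      (∀ t ∈ I, t < z → 0 < r.eval (φ t)) ∧ ∀ t ∈ I, z < t → 0 < r.eval (φ t) * h t := by
  rcases (hI.inter ordConnected_Ioi).isPreconnected.forall_pos_or_forall_neg hh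
    (fun t ht => hne t ht.1 ht.2) with hpos | hneg
  · exact ⟨1, by simp, by simp, by simp, fun t ht hzt => by simpa using hpos t ⟨ht, hzt⟩⟩
  · refine ⟨C (φ z) - X, by compute_degree!, fun x hx => ?_, fun t ht htz => ?_,
      fun t ht hzt => ?_⟩
    · simpa [sub_eq_zero, eq_comm] using hx
    · simpa using hφ ht hz htz
    · rw [eval_sub, eval_C, eval_X]
      exact mul_pos_of_neg_of_neg (sub_neg.2 (hφ hz ht hzt)) (hneg t ⟨ht, hzt⟩)

theorem exists_polynomial_eval_comp_mul_pos {I : Set ℝ} (hI : I.OrdConnected) {φ g : ℝ → ℝ}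
    (hφ : StrictMonoOn φ I) (hφc : ContinuousOn φ I) (hg : ContinuousOn g I)
    (Z : Finset ℝ) (hZI : ↑Z ⊆ I) (hZ : ∀ t ∈ I, g t = 0 → t ∈ Z) :
    ∃ q : ℝ[X], q.natDegree ≤ Z.card ∧ (∀ x, q.eval x = 0 → ∃ z ∈ Z, φ z = x) ∧
      ∀ t ∈ I, t ∉ Z → 0 < q.eval (φ t) * g t := by
  induction Z using Finset.induction_on_max generalizing I with
  | empty =>
    have hg0 : ∀ t ∈ I, g t ≠ 0 := fun t ht h => by simpa using hZ t ht h
    rcases hI.isPreconnected.forall_pos_or_forall_neg hg hg0 with hpos | hneg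
    · exact ⟨1, by simp, by simp, fun t ht _ => by simpa using hpos t ht⟩
    · exact ⟨-1, by simp, by simp, fun t ht _ => by simpa using hneg t ht⟩
  | insert z Z hlt ih =>
    have hzI : z ∈ I := hZI (Finset.mem_insert_self z Z)
    have hzZ : z ∉ Z := fun h => lt_irrefl z (hlt z h)
    obtain ⟨q, hqdeg, hqroots, hqpos⟩ := ih (hI.inter ordConnected_Iio)
      (hφ.mono inter_subset_left) (hφc.mono inter_subset_left) (hg.mono inter_subset_left)
      (fun x hx => ⟨hZI (Finset.mem_insert_of_mem hx), hlt x hx⟩)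
      (fun t ht h0 => (Finset.mem_insert.1 (hZ t ht.1 h0)).resolve_left ht.2.ne)
    have hright : ∀ t ∈ I, z < t → q.eval (φ t) * g t ≠ 0 := by
      intro t ht hzt
      refine mul_ne_zero (fun h0 => ?_) (fun h0 => ?_)
      · obtain ⟨y, hy, hφy⟩ := hqroots _ h0
        have := hφ.injOn (hZI (Finset.mem_insert_of_mem hy)) ht hφy
        exact (hlt y hy).not_gt (this ▸ hzt)
      · rcases Finset.mem_insert.1 (hZ t ht h0) with h | h
        · exact hzt.ne' h
        · exact (hlt t h).not_gt hzt
    obtain ⟨r, hrdeg, hrroots, hrleft, hrright⟩ := exists_natDegree_le_one_eval_comp_mul_pos hI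
      hφ hzI ((q.continuous.comp_continuousOn hφc).mul hg |>.mono inter_subset_left) hright
    refine ⟨q * r, ?_, fun x hx => ?_, fun t ht htZ => ?_⟩
    · rw [Finset.card_insert_of_notMem hzZ]
      exact natDegree_mul_le.trans (add_le_add hqdeg hrdeg)
    · rw [eval_mul] at hx
      rcases mul_eq_zero.1 hx with h | h
      · obtain ⟨y, hy, hφy⟩ := hqroots x h
        exact ⟨y, Finset.mem_insert_of_mem hy, hφy⟩
      · exact ⟨z, Finset.mem_insert_self z Z, (hrroots x h).symm⟩
    · rw [eval_mul, mul_comm (q.eval _), mul_assoc]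
      rcases lt_trichotomy t z with htz | rfl | hzt
      · exact mul_pos (hrleft t ht htz)
          (hqpos t ⟨ht, htz⟩ fun h => htZ (Finset.mem_insert_of_mem h))
      · exact absurd (Finset.mem_insert_self t Z) htZ
      · exact hrright t ht hzt

theorem setIntegral_pos_of_pos_off_countable {α : Type*} [MeasurableSpace α] {μ : Measure α}
    [NullSingletonClass μ] {s Z : Set α} {F : α → ℝ} (hsm : MeasurableSet s) (hs : 0 < μ s)
    (hF : IntegrableOn F s μ) (hZ : Z.Countable) (hpos : ∀ x ∈ s, x ∉ Z → 0 < F x) :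
    0 < ∫ x in s, F x ∂μ := by
  have hZ0 : μ Z = 0 := hZ.measure_zero μ
  have hae : ∀ᵐ x ∂μ.restrict s, 0 ≤ F x := by
    filter_upwards [ae_restrict_mem hsm, ae_restrict_of_ae (measure_eq_zero_iff_ae_notMem.1 hZ0)]
      with x hxs hxZ using (hpos x hxs hxZ).le
  rw [setIntegral_pos_iff_support_of_nonneg_ae hae hF]
  calc 0 < μ s := hs
    _ = μ (s \ Z) := (measure_sdiff_null hZ0).symm
    _ ≤ μ (Function.support F ∩ s) :=
      measure_mono fun x hx => ⟨(hpos x hx.1 hx.2).ne', hx.1⟩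

theorem Finset.exists_strictMono_fin_of_subset_Ioo {α : Type*} [LinearOrder α] {a b : α}
    (hab : a < b) {n : ℕ} (s : Finset α) (hs : ↑s ⊆ Set.Ioo a b) (hcard : s.card + 1 = n) :
    ∃ t : Fin (n + 1) → α, StrictMono t ∧ t 0 = a ∧ t (Fin.last n) = b ∧
      ∀ i, t i = a ∨ t i = b ∨ t i ∈ s := by
  have hb : b ∉ s := fun h => (hs h).2.false
  have ha : a ∉ insert b s := by
    simpa [hab.ne] using fun h => (hs h).1.false
  set S := insert a (insert b s)
  have hS : S.card = n + 1 := by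
    rw [card_insert_of_notMem ha, card_insert_of_notMem hb, hcard]
  set t := S.orderEmbOfFin hS
  have hmem : ∀ i, t i = a ∨ t i = b ∨ t i ∈ s := fun i => by
    have := S.orderEmbOfFin_mem hS i
    simpa only [S, mem_insert] using this
  have hrange : ∀ x ∈ S, ∃ i, t i = x := fun x hx => by
    rw [← mem_coe, ← S.range_orderEmbOfFin hS] at hx
    exact hx
  obtain ⟨i, hi⟩ := hrange a (mem_insert_self a _)
  obtain ⟨j, hj⟩ := hrange b (mem_insert_of_mem (mem_insert_self b s))
  have hbound : ∀ i, a ≤ t i ∧ t i ≤ b := fun i => by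
    rcases hmem i with h | h | h
    · simp [h, hab.le]
    · simp [h, hab.le]
    · exact ⟨(hs h).1.le, (hs h).2.le⟩
  refine ⟨t, t.strictMono, le_antisymm ?_ (hbound 0).1, le_antisymm (hbound _).2 ?_, hmem⟩
  · exact hi ▸ t.monotone (Fin.zero_le i)
  · exact hj ▸ t.monotone (Fin.le_last j)

noncomputable def betaWeight (a b t : ℝ) : ℝ := t ^ (a - 1) * (1 - t) ^ (b - 1)

theorem betaWeight_pos (a b : ℝ) {t : ℝ} (ht : t ∈ Ioo (0 : ℝ) 1) : 0 < betaWeight a b t :=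
  mul_pos (Real.rpow_pos_of_pos ht.1 _) (Real.rpow_pos_of_pos (sub_pos.2 ht.2) _)

theorem integrableOn_betaWeight {a b : ℝ} (ha : 0 < a) (hb : 0 < b) :
    IntegrableOn (betaWeight a b) (Ioo 0 1) := by
  have hC := Complex.betaIntegral_convergent (u := a) (v := b) (by simpa) (by simpa)
  rw [intervalIntegrable_iff_integrableOn_Ioo_of_le zero_le_one] at hC
  refine IntegrableOn.congr_fun hC.re (fun t ht => ?_) measurableSet_Ioo
  have hpow : ∀ x c : ℝ, 0 ≤ x → (x : ℂ) ^ ((c : ℂ) - 1) = ((x ^ (c - 1) : ℝ) : ℂ) :=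
    fun x c hx => by rw [Complex.ofReal_cpow hx]; push_cast; rfl
  rw [show (1 : ℂ) - t = ((1 - t : ℝ) : ℂ) by push_cast; rfl, hpow t a ht.1.le,
    hpow _ b (sub_pos.2 ht.2).le, ← Complex.ofReal_mul, RCLike.re_to_complex, Complex.ofReal_re,
    betaWeight]

theorem integrableOn_betaWeight_mul {a b : ℝ} (ha : 0 < a) (hb : 0 < b) {h : ℝ → ℝ}
    (hh : ContinuousOn h (Icc 0 1)) :
    IntegrableOn (fun t => betaWeight a b t * h t) (Ioo 0 1) :=
  (integrableOn_betaWeight ha hb).mul_continuousOn_of_subset hh measurableSet_Ioo isCompact_Icc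
    Ioo_subset_Icc_self

theorem betaFn_eq_setIntegral (a b : ℝ) : betaFn a b = ∫ t in Ioo 0 1, betaWeight a b t := by
  rw [betaFn, intervalIntegral.integral_of_le zero_le_one, integral_Ioc_eq_integral_Ioo]
  rfl

theorem betaFn_pos {a b : ℝ} (ha : 0 < a) (hb : 0 < b) : 0 < betaFn a b := by
  rw [betaFn_eq_setIntegral]
  exact setIntegral_pos_of_pos_off_countable measurableSet_Ioo (by simp)
    (integrableOn_betaWeight ha hb) countable_empty fun t ht _ => betaWeight_pos a b ht

theorem Ffun_zero (n : ℕ) (ρ : ℝ) (f : ℝ → ℝ) : Ffun n 0 ρ f = f 0 := if_pos rfl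

theorem Ffun_self {n : ℕ} (hn : n ≠ 0) (ρ : ℝ) (f : ℝ → ℝ) : Ffun n n ρ f = f 1 := by
  rw [Ffun, if_neg hn, if_pos rfl]

theorem Ffun_eq_setIntegral {n k : ℕ} (hk : 0 < k) (hkn : k < n) (ρ : ℝ) (f : ℝ → ℝ) :
    Ffun n k ρ f = (betaFn (k * ρ) ((n - k) * ρ))⁻¹ *
      ∫ t in Ioo 0 1, betaWeight (k * ρ) ((n - k) * ρ) t * f t := by
  rw [Ffun, if_neg hk.ne', if_neg hkn.ne, intervalIntegral.integral_of_le zero_le_one,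
    integral_Ioc_eq_integral_Ioo]
  rfl

theorem setIntegral_betaWeight_mul_sub_eq_zero {n k : ℕ} (hk : 0 < k) (hkn : k < n) {ρ : ℝ}
    (hρ : 0 < ρ) {f g : ℝ → ℝ} (hf : ContinuousOn f (Icc 0 1)) (hg : ContinuousOn g (Icc 0 1))
    (hfg : Ffun n k ρ f = Ffun n k ρ g) :
    ∫ t in Ioo 0 1, betaWeight (k * ρ) ((n - k) * ρ) t * (f t - g t) = 0 := by
  have ha : (0 : ℝ) < k * ρ := by positivity
  have hb : (0 : ℝ) < (n - k) * ρ := mul_pos (sub_pos.2 (by exact_mod_cast hkn)) hρ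
  rw [Ffun_eq_setIntegral hk hkn, Ffun_eq_setIntegral hk hkn] at hfg
  simp_rw [mul_sub]
  rw [integral_sub (integrableOn_betaWeight_mul ha hb hf) (integrableOn_betaWeight_mul ha hb hg),
    mul_left_cancel₀ (inv_ne_zero (betaFn_pos ha hb).ne') hfg, sub_self]

theorem betaWeight_mul_rpow_pow (a b ρ : ℝ) (d : ℕ) {t : ℝ} (ht : t ∈ Ioo (0 : ℝ) 1) :
    betaWeight a b t * ((t / (1 - t)) ^ ρ) ^ d = betaWeight (a + d * ρ) (b - d * ρ) t := by
  have h1 : 0 < 1 - t := sub_pos.2 ht.2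
  rw [betaWeight, betaWeight, ← Real.rpow_natCast, ← Real.rpow_mul (div_pos ht.1 h1).le,
    Real.div_rpow ht.1.le h1.le, show a + d * ρ - 1 = (a - 1) + ρ * d by ring,
    show b - d * ρ - 1 = (b - 1) - ρ * d by ring, Real.rpow_add ht.1, Real.rpow_sub h1 (b - 1)]
  ring

def BetaOrthogonal (n : ℕ) (ρ : ℝ) (g : ℝ → ℝ) : Prop :=
  ∀ k : ℕ, 0 < k → k < n → ∫ t in Ioo 0 1, betaWeight (k * ρ) ((n - k) * ρ) t * g t = 0

theorem eqOn_betaWeight_mul_eval_rpow_mul (n : ℕ) (ρ : ℝ) (g : ℝ → ℝ) {p : ℝ[X]}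
    (hp : p.natDegree < n - 1) :
    EqOn (fun t => betaWeight ρ ((n - 1) * ρ) t * (p.eval ((t / (1 - t)) ^ ρ) * g t))
      (fun t => ∑ d ∈ Finset.range (n - 1),
        p.coeff d * (betaWeight ((d + 1 : ℕ) * ρ) ((n - (d + 1 : ℕ)) * ρ) t * g t))
      (Ioo 0 1) := by
  intro t ht
  simp only [eval_eq_sum_range' hp, Finset.sum_mul, Finset.mul_sum]
  refine Finset.sum_congr rfl fun d _ => ?_
  rw [show betaWeight ((d + 1 : ℕ) * ρ) ((n - (d + 1 : ℕ)) * ρ) t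
      = betaWeight (ρ + d * ρ) ((n - 1) * ρ - d * ρ) t by congr 1 <;> push_cast <;> ring,
    ← betaWeight_mul_rpow_pow _ _ _ _ ht]
  ring

theorem BetaOrthogonal.integrableOn_and_setIntegral_eval_rpow_mul_eq_zero {n : ℕ} {ρ : ℝ}
    {g : ℝ → ℝ} (h : BetaOrthogonal n ρ g) (hρ : 0 < ρ) (hg : ContinuousOn g (Icc 0 1))
    {p : ℝ[X]} (hp : p.natDegree < n - 1) :
    IntegrableOn (fun t => betaWeight ρ ((n - 1) * ρ) t * (p.eval ((t / (1 - t)) ^ ρ) * g t))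
        (Ioo 0 1) ∧
      ∫ t in Ioo 0 1, betaWeight ρ ((n - 1) * ρ) t * (p.eval ((t / (1 - t)) ^ ρ) * g t) = 0 := by
  have hEq := eqOn_betaWeight_mul_eval_rpow_mul n ρ g hp
  have hterm : ∀ d ∈ Finset.range (n - 1), IntegrableOn
      (fun t => p.coeff d * (betaWeight ((d + 1 : ℕ) * ρ) ((n - (d + 1 : ℕ)) * ρ) t * g t))
      (Ioo 0 1) := by
    intro d hd
    have hdn : ((d + 1 : ℕ) : ℝ) < n := by
      have := Finset.mem_range.1 hd
      exact_mod_cast (by omega : d + 1 < n)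
    exact (integrableOn_betaWeight_mul (by positivity) (mul_pos (sub_pos.2 hdn) hρ) hg).const_mul _
  refine ⟨(integrableOn_congr_fun hEq measurableSet_Ioo).2 (integrable_finsetSum _ hterm), ?_⟩
  rw [setIntegral_congr_fun measurableSet_Ioo hEq, integral_finsetSum _ hterm]
  refine Finset.sum_eq_zero fun d hd => ?_
  have := Finset.mem_range.1 hd
  rw [integral_const_mul, h (d + 1) d.succ_pos (by omega), mul_zero]

theorem BetaOrthogonal.sub_one_le_card {n : ℕ} {ρ : ℝ} {g : ℝ → ℝ} (h : BetaOrthogonal n ρ g)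
    (hρ : 0 < ρ) (hg : ContinuousOn g (Icc 0 1)) (Z : Finset ℝ)
    (hZ : ∀ t, t ∈ Z ↔ t ∈ Ioo 0 1 ∧ g t = 0) : n - 1 ≤ Z.card := by
  by_contra! hlt
  have hφ : StrictMonoOn (fun t : ℝ => (t / (1 - t)) ^ ρ) (Ioo 0 1) := by
    intro x hx y hy hxy
    refine Real.rpow_lt_rpow (div_pos hx.1 (sub_pos.2 hx.2)).le ?_ hρ
    rw [div_lt_div_iff₀ (sub_pos.2 hx.2) (sub_pos.2 hy.2)]
    nlinarith
  have hφc : ContinuousOn (fun t : ℝ => (t / (1 - t)) ^ ρ) (Ioo 0 1) :=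
    (continuousOn_id.div (continuousOn_const.sub continuousOn_id)
      fun t ht => (sub_pos.2 ht.2).ne').rpow_const fun _ _ => Or.inr hρ.le
  obtain ⟨q, hqdeg, -, hqpos⟩ := exists_polynomial_eval_comp_mul_pos ordConnected_Ioo hφ hφc
    (hg.mono Ioo_subset_Icc_self) Z (fun t ht => ((hZ t).1 ht).1)
    (fun t ht h0 => (hZ t).2 ⟨ht, h0⟩)
  obtain ⟨hint, hzero⟩ :=
    h.integrableOn_and_setIntegral_eval_rpow_mul_eq_zero hρ hg (hqdeg.trans_lt hlt)
  refine (setIntegral_pos_of_pos_off_countable measurableSet_Ioo (by simp) hint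
    Z.countable_toSet fun t ht htZ => ?_).ne' hzero
  exact mul_pos (betaWeight_pos _ _ ht) (hqpos t ht htZ)

theorem BetaOrthogonal.exists_finset_zeros {n : ℕ} {ρ : ℝ} {g : ℝ → ℝ}
    (h : BetaOrthogonal n ρ g) (hρ : 0 < ρ) (hg : ContinuousOn g (Icc 0 1)) :
    ∃ s : Finset ℝ, s.card = n - 1 ∧ ∀ t ∈ s, t ∈ Ioo 0 1 ∧ g t = 0 := by
  rcases {t ∈ Ioo (0 : ℝ) 1 | g t = 0}.finite_or_infinite with hfin | hinf
  · obtain ⟨s, hs, hcard⟩ :=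
      Finset.exists_subset_card_eq (h.sub_one_le_card hρ hg hfin.toFinset (by simp))
    exact ⟨s, hcard, fun t ht => by simpa using hs ht⟩
  · obtain ⟨s, hs, hcard⟩ := hinf.exists_subset_card_eq (n - 1)
    exact ⟨s, hcard, fun t ht => hs ht⟩

theorem remainder_has_roots_general (n : ℕ) (hn : 1 ≤ n) (ρ : ℝ) (hρ : 0 < ρ)
    (f : ℝ → ℝ) (hf : ContinuousOn f (Set.Icc 0 1))
    (L : Polynomial ℝ)
    (hL : ∀ k ≤ n, Ffun n k ρ (fun x => L.eval x) = Ffun n k ρ f) :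
    ∃ t : Fin (n + 1) → ℝ, StrictMono t ∧ t 0 = 0 ∧ t (Fin.last n) = 1 ∧
      ∀ i, f (t i) - L.eval (t i) = 0 := by
  have hL0 : L.eval 0 = f 0 := by simpa only [Ffun_zero] using hL 0 n.zero_le
  have hL1 : L.eval 1 = f 1 := by simpa only [Ffun_self (by omega : n ≠ 0)] using hL n le_rfl
  have hg : ContinuousOn (fun x => f x - L.eval x) (Icc 0 1) := hf.sub L.continuous.continuousOn
  have horth : BetaOrthogonal n ρ (fun x => f x - L.eval x) := fun k hk hkn =>
    setIntegral_betaWeight_mul_sub_eq_zero hk hkn hρ hf L.continuous.continuousOn (hL k hkn.le).symm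
  obtain ⟨s, hcard, hs⟩ := horth.exists_finset_zeros hρ hg
  obtain ⟨t, hmono, ht0, ht1, ht⟩ := Finset.exists_strictMono_fin_of_subset_Ioo zero_lt_one
    (n := n) s (fun x hx => (hs x hx).1) (by omega)
  refine ⟨t, hmono, ht0, ht1, fun i => ?_⟩
  rcases ht i with h | h | h
  · rw [h, hL0, sub_self]
  · rw [h, hL1, sub_self]
  · exact (hs _ h).2

/-- For `n ≥ 1`, `ρ > 0` and continuous `f : [0,1] → ℝ`, there exist points
`0 = t₀ < t₁ < … < t_n = 1` at which `f − L_n^ρ f` vanishes. -/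
theorem remainder_has_roots (n : ℕ) (hn : 1 ≤ n) (ρ : ℝ) (hρ : 0 < ρ)
    (f : ℝ → ℝ) (hf : ContinuousOn f (Set.Icc 0 1))
    (L : Polynomial ℝ) (hLdeg : L.natDegree ≤ n)
    (hL : ∀ k ≤ n, Ffun n k ρ (fun x => L.eval x) = Ffun n k ρ f) :
    ∃ t : Fin (n + 1) → ℝ, StrictMono t ∧ t 0 = 0 ∧ t (Fin.last n) = 1 ∧
      ∀ i, f (t i) - L.eval (t i) = 0 :=
  remainder_has_roots_general n hn ρ hρ f hf L hL
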